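/- arXiv:2010.04349 — 2 statements merged into one kernel-verified Lean document; each statement's English description precedes it below -/
import Mathlib

section
/- If a twice continuously differentiable function f: ℝ^{n×n} → ℝ satisfies δ-RIP_{2r}, then it satisfies 4δ-BDP_{2r}; that is, |[∇²f(M) - ∇²f(M')](K,L)| ≤ 4δ‖K‖_F‖L‖_F for all matrices M, M', K, L of rank at most 2r. -/
noncomputable def frob {m n : Type*} [Fintype m] [Fintype n] (A : Matrix m n ℝ) : ℝ :=
  Real.sqrt (∑ i, ∑ j, (A i j)^2)

attribute [local instance] Matrix.normedAddCommGroup Matrix.normedSpace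

/-- The Hessian of `f` at `M`, as a bilinear form applied to `(K, L)`. -/
noncomputable def Hess {n : ℕ} (f : Matrix (Fin n) (Fin n) ℝ → ℝ)
    (M K L : Matrix (Fin n) (Fin n) ℝ) : ℝ :=
  iteratedFDeriv ℝ 2 f M ![K, L]

/-!
On matrices of rank at most `2r`, RIP pins both Hessian quadratic forms to within `δ‖X‖²` of
`‖X‖²`, so the symmetric form `B = ∇²f(M) - ∇²f(M')` satisfies `|B(X,X)| ≤ 2δ‖X‖²` there.
For `X, Y` of rank at most `r` the matrices `X ± Y` still have rank at most `2r`, and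
polarization `4 B(X,Y) = B(X+Y,X+Y) - B(X-Y,X-Y)` with the parallelogram law gives
`|B(X,Y)| ≤ δ(‖X‖² + ‖Y‖²)`. Projecting the columns of a rank-`2r` matrix onto an
`r`-dimensional subspace of its column space and onto the orthogonal complement splits it into
two rank-`r` matrices with orthogonal columns, so bilinearity and Pythagoras give
`|B(X,Y)| ≤ 2δ(‖X‖² + ‖Y‖²)` at rank `2r`. Applying this to `‖Y‖X` and `‖X‖Y` yields
`4δ‖X‖‖Y‖`.
-/

open Matrix Module Submodule

section Frobenius

variable {m n : Type*} [Fintype m] [Fintype n]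

theorem frob_eq_norm_vec (A : Matrix m n ℝ) :
    frob A = ‖(WithLp.toLp 2 A.vec : EuclideanSpace ℝ (n × m))‖ := by
  rw [frob, EuclideanSpace.norm_eq, Fintype.sum_prod_type, Finset.sum_comm]
  simp [Matrix.vec]

theorem frob_smul (c : ℝ) (A : Matrix m n ℝ) : frob (c • A) = |c| * frob A := by
  rw [frob_eq_norm_vec, frob_eq_norm_vec, vec_smul, WithLp.toLp_smul, norm_smul,
    Real.norm_eq_abs]

theorem frob_eq_zero {A : Matrix m n ℝ} : frob A = 0 ↔ A = 0 := by
  rw [frob_eq_norm_vec, norm_eq_zero, WithLp.toLp_eq_zero, vec_eq_zero_iff]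

theorem frob_pos {A : Matrix m n ℝ} : 0 < frob A ↔ A ≠ 0 := by
  rw [frob_eq_norm_vec, norm_pos_iff, Ne, WithLp.toLp_eq_zero, vec_eq_zero_iff]

theorem frob_add_sq_add_frob_sub_sq (A B : Matrix m n ℝ) :
    frob (A + B) ^ 2 + frob (A - B) ^ 2 = 2 * (frob A ^ 2 + frob B ^ 2) := by
  simp only [frob_eq_norm_vec, vec_add, vec_sub, WithLp.toLp_add, WithLp.toLp_sub]
  exact parallelogram_law_with_norm ℝ _ _

theorem frob_add_sq_of_transpose_mul_eq_zero {A B : Matrix m n ℝ} (h : Aᵀ * B = 0) :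
    frob (A + B) ^ 2 = frob A ^ 2 + frob B ^ 2 := by
  simp only [frob_eq_norm_vec, vec_add, WithLp.toLp_add]
  rw [norm_add_sq_real, EuclideanSpace.inner_toLp_toLp, star_trivial, dotProduct_comm,
    vec_dotProduct_vec, h, trace_zero, mul_zero, add_zero]

end Frobenius

section Rank

variable {m n R : Type*} [Fintype n] [Field R]

theorem Matrix.rank_add_le (A B : Matrix m n R) : (A + B).rank ≤ A.rank + B.rank := by
  rw [rank, rank, rank, mulVecLin_add]
  exact (finrank_mono (LinearMap.range_add_le _ _)).trans
    (finrank_add_le_finrank_add_finrank _ _)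

theorem Matrix.rank_neg (A : Matrix m n R) : (-A).rank = A.rank := by
  rw [← neg_one_smul R A]
  exact rank_smul_of_mem_nonZeroDivisors A
    (mem_nonZeroDivisors_of_ne_zero (neg_ne_zero.2 one_ne_zero))

theorem Matrix.rank_sub_le (A B : Matrix m n R) : (A - B).rank ≤ A.rank + B.rank := by
  simpa only [sub_eq_add_neg, rank_neg] using rank_add_le A (-B)

end Rank

theorem Submodule.exists_le_finrank_eq {K E : Type*} [DivisionRing K] [AddCommGroup E]
    [Module K E] (V : Submodule K E) {k : ℕ} (hk : k ≤ finrank K V) :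
    ∃ W ≤ V, finrank K W = k := by
  obtain ⟨f, hf⟩ := exists_linearIndependent_of_le_finrank hk
  refine ⟨span K (Set.range (V.subtype ∘ f)), span_le.2 ?_, ?_⟩
  · rintro _ ⟨i, rfl⟩
    exact (f i).2
  · rw [finrank_span_eq_card (hf.map' V.subtype V.ker_subtype), Fintype.card_fin]

theorem Submodule.exists_le_finrank_le_finrank_orthogonal_inf_le {𝕜 E : Type*} [RCLike 𝕜]
    [NormedAddCommGroup E] [InnerProductSpace 𝕜 E] (V : Submodule 𝕜 E) [FiniteDimensional 𝕜 V]
    {a b : ℕ} (hV : finrank 𝕜 V ≤ a + b) :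
    ∃ W ≤ V, finrank 𝕜 W ≤ a ∧ finrank 𝕜 (Wᗮ ⊓ V : Submodule 𝕜 E) ≤ b := by
  obtain ⟨W, hWV, hW⟩ := V.exists_le_finrank_eq (min_le_right a (finrank 𝕜 V))
  have := finrank_add_inf_finrank_orthogonal hWV
  exact ⟨W, hWV, by omega, by omega⟩

section ColumnSpace

variable {m n : Type*} [Fintype n]

theorem Matrix.rank_eq_finrank_span_toLp_col (A : Matrix m n ℝ) :
    A.rank = finrank ℝ (span ℝ (Set.range fun j ↦
      (WithLp.toLp 2 (A.col j) : EuclideanSpace ℝ m))) := by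
  rw [rank_eq_finrank_span_cols,
    ← LinearEquiv.finrank_map_eq (WithLp.linearEquiv 2 ℝ (m → ℝ)).symm, map_span,
    ← Set.range_comp]
  rfl

theorem Matrix.rank_le_finrank_of_forall_toLp_col_mem [Fintype m] {A : Matrix m n ℝ}
    {W : Submodule ℝ (EuclideanSpace ℝ m)} (h : ∀ j, WithLp.toLp 2 (A.col j) ∈ W) :
    A.rank ≤ finrank ℝ W := by
  rw [rank_eq_finrank_span_toLp_col]
  exact finrank_mono (span_le.2 (Set.range_subset_iff.2 h))

theorem Matrix.exists_add_eq_of_rank_le_add [Fintype m] (K : Matrix m n ℝ) {a b : ℕ}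
    (hK : K.rank ≤ a + b) :
    ∃ K₁ K₂ : Matrix m n ℝ, K₁ + K₂ = K ∧ K₁.rank ≤ a ∧ K₂.rank ≤ b ∧ K₁ᵀ * K₂ = 0 := by
  set col : n → EuclideanSpace ℝ m := fun j ↦ WithLp.toLp 2 (K.col j)
  set V := span ℝ (Set.range col)
  obtain ⟨W, hWV, hWa, hWb⟩ :=
    V.exists_le_finrank_le_finrank_orthogonal_inf_le (K.rank_eq_finrank_span_toLp_col ▸ hK)
  set P := W.starProjection
  have hP (j : n) : P (col j) ∈ W := W.starProjection_apply_mem (col j)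
  have hQ (j : n) : col j - P (col j) ∈ Wᗮ ⊓ V :=
    mem_inf.2 ⟨W.sub_starProjection_mem_orthogonal _,
      V.sub_mem (subset_span ⟨j, rfl⟩) (hWV (hP j))⟩
  refine ⟨of fun i j ↦ P (col j) i, of fun i j ↦ (col j - P (col j)) i, ?_,
    (rank_le_finrank_of_forall_toLp_col_mem hP).trans hWa,
    (rank_le_finrank_of_forall_toLp_col_mem hQ).trans hWb, ?_⟩
  · ext i j
    simp [col]
  · ext j k
    have hinner := W.inner_right_of_mem_orthogonal (hP j) (hQ k).1
    rw [EuclideanSpace.inner_eq_star_dotProduct] at hinner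
    simpa [mul_apply, dotProduct, mul_comm] using hinner

end ColumnSpace
section BilinForm

variable {m n : Type*} [Fintype m] [Fintype n] {B : LinearMap.BilinForm ℝ (Matrix m n ℝ)}
  {c : ℝ} {k : ℕ} {X Y : Matrix m n ℝ}

theorem LinearMap.BilinForm.IsSymm.abs_apply_le_of_rank_le (hB : B.IsSymm)
    (hdiag : ∀ Z : Matrix m n ℝ, Z.rank ≤ 2 * k → |B Z Z| ≤ c * frob Z ^ 2)
    (hX : X.rank ≤ k) (hY : Y.rank ≤ k) : |B X Y| ≤ c / 2 * (frob X ^ 2 + frob Y ^ 2) := by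
  have hpolar : 4 * B X Y = B (X + Y) (X + Y) - B (X - Y) (X - Y) := by
    simp only [map_add, map_sub, LinearMap.add_apply, LinearMap.sub_apply, hB.eq Y X]
    ring
  have hrank : X.rank + Y.rank ≤ 2 * k := by omega
  have hadd := hdiag (X + Y) ((Matrix.rank_add_le X Y).trans hrank)
  have hsub := hdiag (X - Y) ((Matrix.rank_sub_le X Y).trans hrank)
  calc |B X Y| = |B (X + Y) (X + Y) - B (X - Y) (X - Y)| / 4 := by
        rw [← hpolar, abs_mul, abs_of_pos (four_pos : (0 : ℝ) < 4)]
        ring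
    _ ≤ (c * frob (X + Y) ^ 2 + c * frob (X - Y) ^ 2) / 4 := by
        gcongr
        exact (abs_sub _ _).trans (add_le_add hadd hsub)
    _ = c / 2 * (frob X ^ 2 + frob Y ^ 2) := by
        rw [← mul_add, frob_add_sq_add_frob_sub_sq]
        ring

theorem LinearMap.BilinForm.IsSymm.abs_apply_le_of_rank_le_two_mul (hB : B.IsSymm)
    (hdiag : ∀ Z : Matrix m n ℝ, Z.rank ≤ 2 * k → |B Z Z| ≤ c * frob Z ^ 2)
    (hX : X.rank ≤ 2 * k) (hY : Y.rank ≤ 2 * k) : |B X Y| ≤ c * (frob X ^ 2 + frob Y ^ 2) := by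
  obtain ⟨X₁, X₂, rfl, hX₁, hX₂, hX₁₂⟩ := X.exists_add_eq_of_rank_le_add (two_mul k ▸ hX)
  obtain ⟨Y₁, Y₂, rfl, hY₁, hY₂, hY₁₂⟩ := Y.exists_add_eq_of_rank_le_add (two_mul k ▸ hY)
  have h₁₁ := hB.abs_apply_le_of_rank_le hdiag hX₁ hY₁
  have h₁₂ := hB.abs_apply_le_of_rank_le hdiag hX₁ hY₂
  have h₂₁ := hB.abs_apply_le_of_rank_le hdiag hX₂ hY₁
  have h₂₂ := hB.abs_apply_le_of_rank_le hdiag hX₂ hY₂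
  have hsum : |B (X₁ + X₂) (Y₁ + Y₂)| ≤ |B X₁ Y₁| + |B X₂ Y₁| + (|B X₁ Y₂| + |B X₂ Y₂|) := by
    simp only [map_add, LinearMap.add_apply]
    exact (abs_add_le _ _).trans (add_le_add (abs_add_le _ _) (abs_add_le _ _))
  rw [frob_add_sq_of_transpose_mul_eq_zero hX₁₂, frob_add_sq_of_transpose_mul_eq_zero hY₁₂]
  linarith

theorem LinearMap.BilinForm.abs_apply_le_two_mul_frob_mul_frob
    (h : ∀ X Y : Matrix m n ℝ, X.rank ≤ k → Y.rank ≤ k → |B X Y| ≤ c * (frob X ^ 2 + frob Y ^ 2))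
    (hX : X.rank ≤ k) (hY : Y.rank ≤ k) : |B X Y| ≤ 2 * c * frob X * frob Y := by
  rcases eq_or_ne X 0 with rfl | hX₀
  · simp [frob_eq_zero.2 rfl]
  rcases eq_or_ne Y 0 with rfl | hY₀
  · simp [frob_eq_zero.2 rfl]
  have hXpos : 0 < frob X := frob_pos.2 hX₀
  have hYpos : 0 < frob Y := frob_pos.2 hY₀
  have hscaled := h (frob Y • X) (frob X • Y)
    ((rank_smul_of_mem_nonZeroDivisors X (mem_nonZeroDivisors_of_ne_zero hYpos.ne')).trans_le hX)
    ((rank_smul_of_mem_nonZeroDivisors Y (mem_nonZeroDivisors_of_ne_zero hXpos.ne')).trans_le hY)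
  rw [LinearMap.map_smul₂, map_smul, smul_eq_mul, smul_eq_mul, abs_mul, abs_mul,
    frob_smul, frob_smul, abs_of_pos hXpos, abs_of_pos hYpos] at hscaled
  refine le_of_mul_le_mul_left ?_ (mul_pos hXpos hYpos)
  calc frob X * frob Y * |B X Y| = frob Y * (frob X * |B X Y|) := by ring
    _ ≤ c * ((frob Y * frob X) ^ 2 + (frob X * frob Y) ^ 2) := hscaled
    _ = frob X * frob Y * (2 * c * frob X * frob Y) := by ring

end BilinForm

section Hessian

variable {n : ℕ} {f : Matrix (Fin n) (Fin n) ℝ → ℝ}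

theorem Hess_eq_fderiv_fderiv (M K L : Matrix (Fin n) (Fin n) ℝ) :
    Hess f M K L = fderiv ℝ (fderiv ℝ f) M K L := by
  rw [Hess, iteratedFDeriv_two_apply]
  rfl

theorem Hess_comm (hf : ContDiff ℝ 2 f) (M K L : Matrix (Fin n) (Fin n) ℝ) :
    Hess f M K L = Hess f M L K := by
  simp only [Hess_eq_fderiv_fderiv]
  exact hf.contDiffAt.isSymmSndFDerivAt (by simp) K L

end Hessian

theorem stmt_2_general {n r : ℕ} (δ : ℝ)
    (f : Matrix (Fin n) (Fin n) ℝ → ℝ) (hf : ContDiff ℝ 2 f)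
    (hRIP : ∀ M K : Matrix (Fin n) (Fin n) ℝ, M.rank ≤ 2 * r → K.rank ≤ 2 * r →
      (1 - δ) * frob K ^ 2 ≤ Hess f M K K ∧ Hess f M K K ≤ (1 + δ) * frob K ^ 2)
    (M M' K L : Matrix (Fin n) (Fin n) ℝ)
    (hM : M.rank ≤ 2 * r) (hM' : M'.rank ≤ 2 * r)
    (hK : K.rank ≤ 2 * r) (hL : L.rank ≤ 2 * r) :
    |Hess f M K L - Hess f M' K L| ≤ 4 * δ * frob K * frob L := by
  set B : LinearMap.BilinForm ℝ (Matrix (Fin n) (Fin n) ℝ) :=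
    (fderiv ℝ (fderiv ℝ f) M - fderiv ℝ (fderiv ℝ f) M').toLinearMap₁₂
  have hB (X Y : Matrix (Fin n) (Fin n) ℝ) : B X Y = Hess f M X Y - Hess f M' X Y := by
    simp [B, Hess_eq_fderiv_fderiv]
  have hsymm : B.IsSymm := ⟨fun X Y ↦ by rw [hB, hB, Hess_comm hf M, Hess_comm hf M']⟩
  have hdiag (X : Matrix (Fin n) (Fin n) ℝ) (hX : X.rank ≤ 2 * r) :
      |B X X| ≤ 2 * δ * frob X ^ 2 := by
    obtain ⟨hM₁, hM₂⟩ := hRIP M X hM hX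
    obtain ⟨hM'₁, hM'₂⟩ := hRIP M' X hM' hX
    rw [hB, abs_sub_le_iff]
    constructor <;> linarith
  calc |Hess f M K L - Hess f M' K L| = |B K L| := by rw [hB]
    _ ≤ 2 * (2 * δ) * frob K * frob L :=
      B.abs_apply_le_two_mul_frob_mul_frob
        (fun _ _ hX hY ↦ hsymm.abs_apply_le_of_rank_le_two_mul hdiag hX hY) hK hL
    _ = 4 * δ * frob K * frob L := by ring

theorem stmt_2 {n r : ℕ} (δ : ℝ) (hδ0 : 0 ≤ δ) (hδ1 : δ < 1)
    (f : Matrix (Fin n) (Fin n) ℝ → ℝ) (hf : ContDiff ℝ 2 f)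
    (hRIP : ∀ M K : Matrix (Fin n) (Fin n) ℝ, M.rank ≤ 2 * r → K.rank ≤ 2 * r →
      (1 - δ) * frob K ^ 2 ≤ Hess f M K K ∧ Hess f M K K ≤ (1 + δ) * frob K ^ 2)
    (M M' K L : Matrix (Fin n) (Fin n) ℝ)
    (hM : M.rank ≤ 2 * r) (hM' : M'.rank ≤ 2 * r)
    (hK : K.rank ≤ 2 * r) (hL : L.rank ≤ 2 * r) :
    |Hess f M K L - Hess f M' K L| ≤ 4 * δ * frob K * frob L :=
  stmt_2_general δ f hf hRIP M M' K L hM hM' hK hL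
end

section
/- Let X, Z ∈ ℝ^{n×r} be matrices such that ZᵀX = XᵀZ and this matrix is positive semidefinite. Then λ_r(ZZᵀ)·‖Z-X‖_F² ≤ (1/(2(√2-1)))·‖ZZᵀ - XXᵀ‖_F², where λ_r(ZZᵀ) denotes the r-th largest eigenvalue of ZZᵀ. -/
open Matrix

/-- The `k`-th largest eigenvalue (1-indexed) of a Hermitian real matrix. -/
noncomputable def kthLargestEig {n : ℕ} (A : Matrix (Fin n) (Fin n) ℝ)
    (hA : A.IsHermitian) (k : ℕ) : ℝ :=
  ((Finset.univ.val.map hA.eigenvalues).sort (· ≤ ·)).getD (n - k) 0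

/-!
Write `d = Z - X`, `S = ZᵀZ`, `P = ZᵀX` and `c = √2`. Since `P` is symmetric, everything reduces
to traces of products of `S`, `P`, `XᵀX`, and one finds
`‖ZZᵀ - XXᵀ‖² = 2(c - 1)·tr(S dᵀd) + ‖c·Zᵀd - dᵀd‖² + (4 - 2c)·tr(P dᵀd)`,
where the last two terms are nonnegative because `P ⪰ 0`. It remains to bound `tr(S dᵀd)` below
by `λ_r‖d‖²`. When `λ_r > 0`, the matrix `ZZᵀ` has rank `min(r, n)`, so its nonzero eigenvalues
are all `≥ λ_r` and `(ZZᵀ)² ⪰ λ_r·ZZᵀ`. Moreover `ZᵀZ` or `ZZᵀ` is then invertible, so the rows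
of `X` lie in the row space of `Z` (in the second case since `X = (ZZᵀ)⁻¹Z·XᵀZ`), i.e. `d = N Z`
for some `N`; hence `tr(S dᵀd) - λ_r‖d‖² = tr(N((ZZᵀ)² - λ_r·ZZᵀ)Nᵀ) ≥ 0`.
-/

open Finset

theorem frob_sq {m n : Type*} [Fintype m] [Fintype n] (A : Matrix m n ℝ) :
    frob A ^ 2 = trace (Aᵀ * A) := by
  rw [frob, Real.sq_sqrt (by positivity), trace, Finset.sum_comm]
  simp [mul_apply, sq]

theorem Matrix.PosSemidef.trace_mul_transpose_mul_self_nonneg {m k : Type*} [Fintype m]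
    [Fintype k] {P : Matrix k k ℝ} (hP : P.PosSemidef) (D : Matrix m k ℝ) :
    0 ≤ trace (P * (Dᵀ * D)) := by
  rw [← Matrix.mul_assoc, trace_mul_comm, ← Matrix.mul_assoc]
  simpa using (hP.mul_mul_conjTranspose_same D).trace_nonneg

section Gram

variable {m k : Type*} [Fintype m] [Fintype k] (Z X : Matrix m k ℝ)

theorem trace_mul_transpose_mul_mul_transpose (A B C D : Matrix m k ℝ) :
    trace (A * Bᵀ * (C * Dᵀ)) = trace (Bᵀ * C * (Dᵀ * A)) := by
  simp only [Matrix.mul_assoc]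
  rw [trace_mul_comm]
  simp only [Matrix.mul_assoc]

theorem frob_sq_mul_transpose_sub_mul_transpose :
    frob (Z * Zᵀ - X * Xᵀ) ^ 2 = trace (Zᵀ * Z * (Zᵀ * Z)) + trace (Xᵀ * X * (Xᵀ * X))
      - 2 * trace ((Zᵀ * X)ᵀ * (Zᵀ * X)) := by
  simp only [frob_sq, transpose_sub, transpose_mul, transpose_transpose, sub_mul, mul_sub,
    trace_sub, trace_mul_transpose_mul_mul_transpose]
  rw [trace_mul_comm (Zᵀ * X)]
  ring

theorem frob_sq_mul_transpose_sub_mul_transpose_eq_of_sq_eq_two (hsymm : Zᵀ * X = Xᵀ * Z)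
    {c : ℝ} (hc : c ^ 2 = 2) :
    frob (Z * Zᵀ - X * Xᵀ) ^ 2 =
      2 * (c - 1) * trace (Zᵀ * Z * ((Z - X)ᵀ * (Z - X)))
      + frob (c • (Zᵀ * (Z - X)) - (Z - X)ᵀ * (Z - X)) ^ 2
      + (4 - 2 * c) * trace (Zᵀ * X * ((Z - X)ᵀ * (Z - X))) := by
  have hQ : Zᵀ * (Z - X) = Zᵀ * Z - Zᵀ * X := Matrix.mul_sub _ _ _
  have hB : (Z - X)ᵀ * (Z - X) = Zᵀ * Z - (2 : ℝ) • (Zᵀ * X) + Xᵀ * X := by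
    rw [transpose_sub, Matrix.sub_mul, Matrix.mul_sub, Matrix.mul_sub, ← hsymm, two_smul]
    abel
  have hS : (Zᵀ * Z)ᵀ = Zᵀ * Z := by simp
  have hT : (Xᵀ * X)ᵀ = Xᵀ * X := by simp
  have hP : (Zᵀ * X)ᵀ = Zᵀ * X := by rw [transpose_mul, transpose_transpose, hsymm]
  rw [frob_sq_mul_transpose_sub_mul_transpose, frob_sq, hQ, hB, hP]
  set S := Zᵀ * Z
  set T := Xᵀ * X
  set P := Zᵀ * X
  simp only [transpose_sub, transpose_add, transpose_smul, hS, hT, hP, Matrix.sub_mul,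
    Matrix.mul_sub, Matrix.add_mul, Matrix.mul_add, Matrix.smul_mul, Matrix.mul_smul, trace_sub,
    trace_add, trace_smul, smul_eq_mul]
  rw [trace_mul_comm P S, trace_mul_comm T S, trace_mul_comm T P]
  linear_combination (2 * trace (S * P) - trace (S * S) - trace (P * P)) * hc

end Gram

theorem two_mul_sqrt_two_sub_one_mul_trace_le {m k : Type*} [Fintype m] [Fintype k]
    {Z X : Matrix m k ℝ} (hsymm : Zᵀ * X = Xᵀ * Z) (hpsd : (Zᵀ * X).PosSemidef) :
    2 * (√2 - 1) * trace (Zᵀ * Z * ((Z - X)ᵀ * (Z - X))) ≤ frob (Z * Zᵀ - X * Xᵀ) ^ 2 := by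
  rw [frob_sq_mul_transpose_sub_mul_transpose_eq_of_sq_eq_two Z X hsymm
    (Real.sq_sqrt zero_le_two)]
  have hc : 0 ≤ 4 - 2 * √2 := by linarith [Real.sqrt_two_lt_three_halves]
  exact le_add_of_le_of_nonneg (le_add_of_nonneg_right (sq_nonneg _))
    (mul_nonneg hc (hpsd.trace_mul_transpose_mul_self_nonneg (Z - X)))

theorem List.Pairwise.length_sub_le_countP_getElem_le {α : Type*} [Preorder α] [DecidableLE α]
    {L : List α} (hL : L.Pairwise (· ≤ ·)) {i : ℕ} (hi : i < L.length) :
    L.length - i ≤ L.countP (fun x => L[i] ≤ x) := by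
  have hdrop : ∀ x ∈ L.drop i, L[i] ≤ x := by
    intro x hx
    obtain ⟨j, hj, rfl⟩ := List.mem_iff_getElem.mp hx
    rw [List.getElem_drop]
    exact hL.rel_get_of_le (a := ⟨i, hi⟩) (b := ⟨i + j, by simp at hj; omega⟩) (by simp)
  calc L.length - i = (L.drop i).countP (fun x => L[i] ≤ x) := by
        rw [List.countP_eq_length.mpr (by simpa using hdrop), List.length_drop]
    _ ≤ L.countP (fun x => L[i] ≤ x) := (List.drop_sublist _ _).countP_le

namespace Matrix.IsHermitian

variable {n : ℕ} {A : Matrix (Fin n) (Fin n) ℝ} (hA : A.IsHermitian) {k : ℕ}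

theorem min_le_card_le_eigenvalues (hpos : 0 < kthLargestEig A hA k) :
    min k n ≤ #{i | kthLargestEig A hA k ≤ hA.eigenvalues i} := by
  set L := (univ.val.map hA.eigenvalues).sort (· ≤ ·)
  have hlen : L.length = n := by simp [L]
  -- an out-of-range index would make `kthLargestEig` the default value `0`
  have hi : n - k < L.length := by
    by_contra h
    exact hpos.ne (List.getD_eq_default L 0 (not_lt.mp h)).symm
  have hμ : kthLargestEig A hA k = L[n - k] := List.getD_eq_getElem L 0 hi
  have hcount := (Multiset.pairwise_sort _ _).length_sub_le_countP_getElem_le hi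
  rw [← hμ, hlen] at hcount
  calc min k n = n - (n - k) := by omega
    _ ≤ _ := hcount
    _ = #{i | kthLargestEig A hA k ≤ hA.eigenvalues i} := by
      rw [← Multiset.coe_countP, Multiset.sort_eq, Multiset.countP_map]
      rfl

theorem min_le_rank (hpos : 0 < kthLargestEig A hA k) : min k n ≤ A.rank := by
  rw [hA.rank_eq_card_non_zero_eigs, Fintype.card_subtype]
  refine (hA.min_le_card_le_eigenvalues hpos).trans (card_le_card fun i => ?_)
  simp only [mem_filter, mem_univ, true_and]
  exact fun hi => (hpos.trans_le hi).ne'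

theorem eigenvalues_eq_zero_or_le (hrank : A.rank ≤ k) (hpos : 0 < kthLargestEig A hA k)
    (i : Fin n) : hA.eigenvalues i = 0 ∨ kthLargestEig A hA k ≤ hA.eigenvalues i := by
  set μ := kthLargestEig A hA k
  have hsub : ({i | μ ≤ hA.eigenvalues i} : Finset (Fin n)) ⊆
      ({i | hA.eigenvalues i ≠ 0} : Finset (Fin n)) :=
    fun i => by simpa using fun hi => (hpos.trans_le hi).ne'
  have hcard : #{i | hA.eigenvalues i ≠ 0} ≤ #{i | μ ≤ hA.eigenvalues i} := by
    rw [← Fintype.card_subtype, ← hA.rank_eq_card_non_zero_eigs]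
    exact (le_min hrank (rank_le_height A)).trans (hA.min_le_card_le_eigenvalues hpos)
  have heq := eq_of_subset_of_card_le hsub hcard
  rw [or_iff_not_imp_left]
  intro hi
  have hmem : i ∈ ({i | hA.eigenvalues i ≠ 0} : Finset (Fin n)) := by simpa using hi
  simpa [← heq] using hmem

end Matrix.IsHermitian

theorem Matrix.IsHermitian.posSemidef_mul_self_sub_smul {ι : Type*} [Fintype ι] [DecidableEq ι]
    {A : Matrix ι ι ℝ} (hA : A.IsHermitian) {μ : ℝ} (hμ : 0 ≤ μ)
    (h : ∀ i, hA.eigenvalues i = 0 ∨ μ ≤ hA.eigenvalues i) : (A * A - μ • A).PosSemidef := by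
  rw [hA.spectral_theorem, ← map_mul, ← map_smul, ← map_sub, Unitary.conjStarAlgAut_apply]
  refine PosSemidef.mul_mul_conjTranspose_same ?_ _
  rw [diagonal_mul_diagonal, ← diagonal_smul, diagonal_sub, posSemidef_diagonal_iff]
  intro i
  rcases h i with h0 | hle
  · simp [h0]
  · simp only [Pi.smul_apply, Function.comp_apply, RCLike.ofReal_real_eq_id, id_eq, smul_eq_mul,
      sub_nonneg]
    exact mul_le_mul_of_nonneg_right hle (hμ.trans hle)

theorem Matrix.isUnit_of_rank_eq_card {ι K : Type*} [Fintype ι] [DecidableEq ι] [Field K]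
    {A : Matrix ι ι K} (h : A.rank = Fintype.card ι) : IsUnit A := by
  have hrange : LinearMap.range A.mulVecLin = ⊤ :=
    Submodule.eq_top_of_finrank_eq (by simpa [rank] using h)
  exact mulVec_surjective_iff_isUnit.mp (LinearMap.range_eq_top.mp hrange)

theorem exists_eq_mul_of_min_le_rank {m k : Type*} [Fintype m] [Fintype k] [DecidableEq m]
    [DecidableEq k] {Z X : Matrix m k ℝ} (hsymm : Zᵀ * X = Xᵀ * Z)
    (hrank : min (Fintype.card k) (Fintype.card m) ≤ Z.rank) :
    ∃ M : Matrix m m ℝ, X = M * Z := by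
  rcases le_total (Fintype.card k) (Fintype.card m) with hkm | hmk
  · have hu : IsUnit (Zᵀ * Z) := isUnit_of_rank_eq_card <| by
      rw [rank_transpose_mul_self]
      exact le_antisymm (rank_le_card_width Z) (by simpa [hkm] using hrank)
    refine ⟨X * (Zᵀ * Z)⁻¹ * Zᵀ, ?_⟩
    rw [Matrix.mul_assoc, Matrix.mul_assoc, nonsing_inv_mul _ ((isUnit_iff_isUnit_det _).mp hu),
      Matrix.mul_one]
  · have hu : IsUnit (Z * Zᵀ) := isUnit_of_rank_eq_card <| by
      rw [rank_self_mul_transpose]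
      exact le_antisymm (rank_le_card_height Z) (by simpa [hmk] using hrank)
    refine ⟨(Z * Zᵀ)⁻¹ * Z * Xᵀ, ?_⟩
    rw [Matrix.mul_assoc, Matrix.mul_assoc, ← hsymm, ← Matrix.mul_assoc Z, ← Matrix.mul_assoc,
      nonsing_inv_mul _ ((isUnit_iff_isUnit_det _).mp hu), Matrix.one_mul]

theorem mul_frob_sq_le_trace_of_posSemidef {m k l : Type*} [Fintype m] [Fintype k] [Fintype l]
    {Z : Matrix m k ℝ} {μ : ℝ} (h : (Z * Zᵀ * (Z * Zᵀ) - μ • (Z * Zᵀ)).PosSemidef)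
    (N : Matrix l m ℝ) :
    μ * frob (N * Z) ^ 2 ≤ trace (Zᵀ * Z * ((N * Z)ᵀ * (N * Z))) := by
  have h1 : trace ((N * Z)ᵀ * (N * Z)) = trace (N * (Z * Zᵀ) * Nᵀ) := by
    rw [transpose_mul, Matrix.mul_assoc, trace_mul_comm, trace_mul_comm _ Nᵀ]
    simp only [Matrix.mul_assoc]
  have h2 : trace (Zᵀ * Z * ((N * Z)ᵀ * (N * Z))) = trace (N * (Z * Zᵀ * (Z * Zᵀ)) * Nᵀ) := by
    rw [transpose_mul, ← Matrix.mul_assoc, trace_mul_comm]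
    simp only [Matrix.mul_assoc]
  have := (h.mul_mul_conjTranspose_same N).trace_nonneg
  rw [conjTranspose_eq_transpose_of_trivial, Matrix.mul_sub, Matrix.sub_mul, trace_sub,
    Matrix.mul_smul, Matrix.smul_mul, trace_smul, smul_eq_mul, sub_nonneg] at this
  rwa [frob_sq, h1, h2]

theorem stmt_6 {n r : ℕ} (X Z : Matrix (Fin n) (Fin r) ℝ)
    (hsymm : Zᵀ * X = Xᵀ * Z) (hpsd : (Zᵀ * X).PosSemidef)
    (hherm : (Z * Zᵀ).IsHermitian) :
    kthLargestEig (Z * Zᵀ) hherm r * frob (Z - X) ^ 2 ≤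
      (1 / (2 * (Real.sqrt 2 - 1))) * frob (Z * Zᵀ - X * Xᵀ) ^ 2 := by
  set μ := kthLargestEig (Z * Zᵀ) hherm r
  have hc : 0 < 2 * (√2 - 1) := by linarith [Real.one_lt_sqrt_two]
  rw [one_div_mul_eq_div, le_div_iff₀ hc]
  rcases le_or_gt μ 0 with hμ | hμ
  · exact (mul_nonpos_of_nonpos_of_nonneg (mul_nonpos_of_nonpos_of_nonneg hμ (sq_nonneg _))
      hc.le).trans (sq_nonneg _)
  obtain ⟨M, hM⟩ : ∃ M, X = M * Z := exists_eq_mul_of_min_le_rank hsymm <| by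
    simpa [rank_self_mul_transpose] using hherm.min_le_rank hμ
  have hgap := hherm.posSemidef_mul_self_sub_smul hμ.le
    (hherm.eigenvalues_eq_zero_or_le ((rank_mul_le_left _ _).trans (rank_le_width Z)) hμ)
  have hrow : Z - X = (1 - M) * Z := by rw [hM, Matrix.sub_mul, Matrix.one_mul]
  calc μ * frob (Z - X) ^ 2 * (2 * (√2 - 1))
      ≤ 2 * (√2 - 1) * trace (Zᵀ * Z * ((Z - X)ᵀ * (Z - X))) := by
        rw [mul_comm, hrow]
        exact mul_le_mul_of_nonneg_left (mul_frob_sq_le_trace_of_posSemidef hgap _) hc.le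
    _ ≤ frob (Z * Zᵀ - X * Xᵀ) ^ 2 := two_mul_sqrt_two_sub_one_mul_trace_le hsymm hpsd
end
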